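/- arXiv:1702.03479 — 2 statements merged into one kernel-verified Lean document; each statement's English description precedes it below -/
import Mathlib

section
/- Let d and N be positive integers with N ≥ 2^d. Let f ∈ ℝ^d be a vector all of whose entries are nonzero, and let v_0, v_1, …, v_N be vectors in ℝ^d. Then there exist indices j and k with 0 ≤ j < k ≤ N such that every entry of the vector f + v_k − v_j is nonzero. (Lemma 3.2 of the paper.) -/
/-! Colour each index `i` by the parities of `⌊v i s / f s⌋`, `s : Fin d`. There are only `2 ^ d`
colours for the `N + 1 > 2 ^ d` indices, so two indices `j < k` share a colour. If
`f s + v k s - v j s = 0`, then `v j s / f s = v k s / f s + 1`, so the two floors differ by one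
and have different parities. -/

section FloorParity

variable {K : Type*} [Field K] [LinearOrder K] [IsStrictOrderedRing K] [FloorRing K]

def floorParity (f x : K) : ZMod 2 := ⌊x / f⌋

theorem floorParity_add_self {f : K} (hf : f ≠ 0) (x : K) :
    floorParity f (f + x) ≠ floorParity f x := by
  have hfloor : ⌊(f + x) / f⌋ = ⌊x / f⌋ + 1 := by
    rw [add_div, div_self hf, add_comm, Int.floor_add_one]
  intro h
  simp only [floorParity, hfloor, Int.cast_add, Int.cast_one, add_eq_left] at h
  exact one_ne_zero h

theorem add_sub_ne_zero_of_floorParity_eq {f a b : K} (hf : f ≠ 0)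
    (h : floorParity f a = floorParity f b) : f + b - a ≠ 0 := by
  intro h0
  rw [show a = f + b by linear_combination -h0] at h
  exact floorParity_add_self hf b h

end FloorParity

theorem exists_lt_le_map_eq_of_card_le {α : Type*} [Fintype α] (c : ℕ → α) {N : ℕ}
    (hN : Fintype.card α ≤ N) : ∃ j k, j < k ∧ k ≤ N ∧ c j = c k := by
  have hcard : Fintype.card α < Fintype.card (Fin (N + 1)) := by
    rw [Fintype.card_fin]; omega
  obtain ⟨a, b, hab, hc⟩ := Fintype.exists_ne_map_eq_of_card_lt (fun i : Fin (N + 1) => c i) hcard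
  rcases lt_or_gt_of_ne (Fin.val_ne_of_ne hab) with hlt | hlt
  · exact ⟨a, b, hlt, Nat.lt_succ_iff.mp b.isLt, hc⟩
  · exact ⟨b, a, hlt, Nat.lt_succ_iff.mp a.isLt, hc.symm⟩

theorem forbidden_values_general (d N : ℕ) (hNd : 2 ^ d ≤ N)
    (f : Fin d → ℝ) (hf : ∀ s, f s ≠ 0) (v : ℕ → Fin d → ℝ) :
    ∃ j k : ℕ, j < k ∧ k ≤ N ∧ ∀ s : Fin d, f s + v k s - v j s ≠ 0 := by
  have hcard : Fintype.card (Fin d → ZMod 2) ≤ N := by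
    simpa only [Fintype.card_fun, Fintype.card_fin, ZMod.card] using hNd
  obtain ⟨j, k, hjk, hkN, hc⟩ :=
    exists_lt_le_map_eq_of_card_le (fun i s => floorParity (f s) (v i s)) hcard
  exact ⟨j, k, hjk, hkN, fun s => add_sub_ne_zero_of_floorParity_eq (hf s) (congrFun hc s)⟩

/-- Lemma 3.2: forbidden-values lemma for vectors in ℝ^d. -/
theorem forbidden_values (d N : ℕ) (hd : 0 < d) (hN : 0 < N) (hNd : 2 ^ d ≤ N)
    (f : Fin d → ℝ) (hf : ∀ s, f s ≠ 0) (v : ℕ → Fin d → ℝ) :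
    ∃ j k : ℕ, j < k ∧ k ≤ N ∧ ∀ s : Fin d, f s + v k s - v j s ≠ 0 :=
  forbidden_values_general d N hNd f hf v
end

section
/- Let q, S, T be positive integers, and let A and B be integers with A ≥ 2^S · q^{S+T} and B ≥ 3^S · 2^T · (S+T) · q^{S+T}. Let j_1, …, j_A be vectors in ℤ^{S+T} whose first S entries are all nonzero, and let l_1, …, l_B be vectors in ℤ^{S+T} whose last T entries are all nonzero. Then there exist a nonempty subset 𝒜 ⊆ {1, …, A} and a (possibly empty) subset ℬ ⊆ {1, …, B} such that every entry of the vector Σ_{a∈𝒜} j_a + Σ_{b∈ℬ} l_b is a nonzero multiple of q. (The arithmetic core of Proposition 3.1: the construction of the sublink 𝒵 = Z_1 ∪ ⋯ ∪ Z_C whose total linking vector z_0 with 𝒳 ∪ 𝒴 has every entry a nonzero multiple of q, where j_a = link(J_a, 𝒳∪𝒴) and l_b = link(L_b, 𝒳∪𝒴).) -/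
/-!
Among any `|G|` elements of a finite abelian group `G` some nonempty subfamily sums to zero, since
two of the `|G| + 1` prefix sums of an enumeration coincide; in `G = (ℤ/q)^(S+T)` this produces
sums all of whose entries are divisible by `q`.

By pigeonhole, `q^(S+T)` of the `j_a` share the signs of their first `S` entries, and a zero-sum
subfamily `𝒜` of them has sum `x` with nonzero first `S` entries. Likewise `(S+T) q^(S+T)` of the
`l_b` share all their signs (the last `T` of which are nonzero), and extracting zero-sum
subfamilies greedily gives a chain `ℬ₀ ⊂ ⋯ ⊂ ℬ_(S+T)` of such `l_b` with sums divisible by `q`.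
In every coordinate `s` the entries `x_s + ∑_{b ∈ ℬ_k} (l_b)_s` are strictly monotone in `k`, or
constantly `x_s ≠ 0`, so each coordinate vanishes for at most one `k`; as there are `S + T + 1`
values of `k` and only `S + T` coordinates, some `ℬ_k` works.
-/

open Finset

namespace Finset

variable {ι G : Type*} [DecidableEq ι] [AddCommGroup G] [Fintype G]

theorem exists_subset_card_le_sum_eq_zero (g : ι → G) {F : Finset ι}
    (hF : Fintype.card G ≤ #F) :
    ∃ F' ⊆ F, F'.Nonempty ∧ #F' ≤ Fintype.card G ∧ ∑ i ∈ F', g i = 0 := by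
  set l := F.toList
  have hl : l.length = #F := F.length_toList
  obtain ⟨k, hk, k', hk', hne, heq⟩ := exists_ne_map_eq_of_card_lt_of_maps_to
    (s := range (Fintype.card G + 1)) (t := univ) (f := fun k => ((l.take k).map g).sum)
    (by simp) (fun _ _ => mem_coe.2 (mem_univ _))
  simp only [mem_range] at hk hk'
  wlog hlt : k < k' generalizing k k'
  · exact this k' k hne.symm heq.symm hk' hk (by omega)
  set d := (l.take k').drop k
  have hd : l.take k' = l.take k ++ d := by
    rw [← List.take_append_drop k (l.take k'), List.take_take, min_eq_left hlt.le]
  have hdl : d.length = k' - k := by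
    simp only [d, List.length_drop, List.length_take, hl]; omega
  refine ⟨d.toFinset, fun i hi => ?_, ?_, ?_, ?_⟩
  · exact mem_toList.1 (List.mem_of_mem_take (List.mem_of_mem_drop (List.mem_toFinset.1 hi)))
  · exact List.toFinset_nonempty_iff _ |>.2 (List.ne_nil_of_length_pos (by omega))
  · exact (List.toFinset_card_le d).trans (by omega)
  · have hnd : d.Nodup :=
      (F.nodup_toList.sublist (List.take_sublist _ _)).sublist (List.drop_sublist _ _)
    rw [List.sum_toFinset _ hnd]
    simpa [hd] using heq.symm

theorem exists_strictMonoOn_sum_eq_zero (g : ι → G) (m : ℕ) {F : Finset ι}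
    (hF : m * Fintype.card G ≤ #F) :
    ∃ P : ℕ → Finset ι, StrictMonoOn P (Set.Iic m) ∧ P m ⊆ F ∧
      ∀ k ≤ m, ∑ i ∈ P k, g i = 0 := by
  induction m generalizing F with
  | zero =>
    exact ⟨fun _ => ∅, strictMonoOn_Iic_of_lt_succ fun k hk => absurd hk k.not_lt_zero,
      empty_subset _, by simp⟩
  | succ m ih =>
    obtain ⟨F₀, hF₀, hF₀ne, hF₀card, hF₀sum⟩ :=
      exists_subset_card_le_sum_eq_zero g (F := F) (le_trans (by nlinarith) hF)
    obtain ⟨Q, hQ, hQF, hQsum⟩ := ih (F := F \ F₀) (by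
      rw [card_sdiff_of_subset hF₀]; rw [add_mul] at hF; omega)
    have hdisj : ∀ k ≤ m, Disjoint F₀ (Q k) := fun k hk =>
      disjoint_of_subset_right ((hQ.monotoneOn hk (Set.mem_Iic.2 le_rfl) hk).trans hQF)
        disjoint_sdiff
    refine ⟨fun k => if k = 0 then ∅ else F₀ ∪ Q (k - 1),
      strictMonoOn_Iic_of_lt_succ fun k hk => ?_, ?_, fun k hk => ?_⟩
    · rcases k with _ | k
      · exact empty_ssubset.2 (hF₀ne.mono subset_union_left)
      · have hQk : Q k ⊂ Q (k + 1) :=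
          hQ (Set.mem_Iic.2 (by omega)) (Set.mem_Iic.2 (by omega)) (by omega)
        show F₀ ∪ Q k ⊂ F₀ ∪ Q (k + 1)
        refine ssubset_iff_subset_ne.2 ⟨union_subset_union_right hQk.subset, fun h => hQk.ne ?_⟩
        simpa only [union_sdiff_cancel_left (hdisj k (by omega)),
          union_sdiff_cancel_left (hdisj (k + 1) (by omega))] using congrArg (· \ F₀) h
    · simpa using union_subset hF₀ (hQF.trans sdiff_subset)
    · rcases k with _ | k
      · simp
      · simp [sum_union (hdisj k (by omega)), hF₀sum, hQsum k (by omega)]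

end Finset

theorem exists_subset_forall_sign_eq {κ ι α : Type*} [Fintype ι] [Zero α] [Preorder α]
    [DecidableLT α] (v : κ → ι → α) (F : Finset κ) (t : ι → Finset SignType)
    (ht : ∀ s, (t s).Nonempty) (hv : ∀ b ∈ F, ∀ s, SignType.sign (v b s) ∈ t s) {N : ℕ}
    (hN : (∏ s, #(t s)) * N ≤ #F) :
    ∃ σ : ι → SignType, (∀ s, σ s ∈ t s) ∧
      ∃ F' ⊆ F, N ≤ #F' ∧ ∀ b ∈ F', ∀ s, SignType.sign (v b s) = σ s := by
  classical
  obtain ⟨σ, hσ, hcard⟩ := exists_le_card_fiber_of_mul_le_card_of_maps_to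
    (f := fun b s => SignType.sign (v b s)) (t := Fintype.piFinset t)
    (fun b hb => Fintype.mem_piFinset.2 (hv b hb)) (Fintype.piFinset_nonempty.2 ht)
    (by rwa [Fintype.card_piFinset])
  exact ⟨σ, Fintype.mem_piFinset.1 hσ, _, filter_subset _ _, hcard,
    fun b hb s => congrFun (mem_filter.1 hb).2 s⟩

theorem sum_intCast_pi_eq_zero_iff {κ ι : Type*} (q : ℕ) (v : κ → ι → ℤ) (F : Finset κ) :
    ∑ b ∈ F, (fun s => (v b s : ZMod q)) = 0 ↔ ∀ s, (q : ℤ) ∣ ∑ b ∈ F, v b s := by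
  simp only [funext_iff, Finset.sum_apply, Pi.zero_apply, ← ZMod.intCast_zmod_eq_zero_iff_dvd,
    Int.cast_sum]

theorem subsingleton_setOf_add_sum_eq_zero {κ α : Type*} [DecidableEq κ] [AddCommGroup α]
    [LinearOrder α] [IsOrderedAddMonoid α] {P : ℕ → Finset κ} {m : ℕ}
    (hP : StrictMonoOn P (Set.Iic m)) {v : κ → α} {σ : SignType}
    (hσ : ∀ b ∈ P m, SignType.sign (v b) = σ) {x : α} (hx : σ = 0 → x ≠ 0) :
    {k | k ≤ m ∧ x + ∑ b ∈ P k, v b = 0}.Subsingleton := by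
  have hPm : ∀ k ≤ m, P k ⊆ P m := fun k hk => hP.monotoneOn hk (Set.mem_Iic.2 le_rfl) hk
  rintro k ⟨hk, hk0⟩ k' ⟨hk', hk'0⟩
  by_contra hne
  wlog hlt : k < k' generalizing k k'
  · exact this hk' hk'0 hk hk0 (Ne.symm hne) (by omega)
  have hsub : P k ⊂ P k' := hP hk hk' hlt
  have hdiff : ∑ b ∈ P k' \ P k, v b = 0 := by
    rw [Finset.sum_sdiff_eq_sub hsub.subset]
    exact sub_eq_zero.2 (add_left_cancel (hk'0.trans hk0.symm))
  have hσ0 : σ = 0 := by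
    rw [← sign_sum (Finset.sdiff_nonempty.2 hsub.not_subset) σ
      fun b hb => hσ b (hPm k' hk' (Finset.sdiff_subset hb)), hdiff, sign_zero]
  have hPk : ∑ b ∈ P k, v b = 0 :=
    Finset.sum_eq_zero fun b hb => sign_eq_zero_iff.1 ((hσ b (hPm k hk hb)).trans hσ0)
  exact hx hσ0 (by rwa [hPk, add_zero] at hk0)

theorem exists_le_card_forall_not_of_subsingleton {ι : Type*} [Fintype ι] (Z : ℕ → ι → Prop)
    (h : ∀ s, {k | k ≤ Fintype.card ι ∧ Z k s}.Subsingleton) :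
    ∃ k ≤ Fintype.card ι, ∀ s, ¬ Z k s := by
  cases isEmpty_or_nonempty ι
  · exact ⟨0, Nat.zero_le _, isEmptyElim⟩
  by_contra! hcon
  choose! f hf using hcon
  obtain ⟨k, hk, k', hk', hne, heq⟩ := exists_ne_map_eq_of_card_lt_of_maps_to
    (s := range (Fintype.card ι + 1)) (t := univ) (f := f) (by simp)
    (fun _ _ => mem_coe.2 (mem_univ _))
  simp only [mem_range] at hk hk'
  exact hne (h (f k') ⟨by omega, heq ▸ hf k (by omega)⟩ ⟨by omega, hf k' (by omega)⟩)

theorem exists_subset_Icc_dvd_and_sum_ne_zero (q S T A : ℕ) [NeZero q]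
    (hA : 2 ^ S * q ^ (S + T) ≤ A) (J : ℕ → Fin (S + T) → ℤ)
    (hJ : ∀ a : ℕ, 1 ≤ a → a ≤ A → ∀ s : Fin (S + T), (s : ℕ) < S → J a s ≠ 0) :
    ∃ 𝒜 ⊆ Icc 1 A, 𝒜.Nonempty ∧
      ∀ s : Fin (S + T), (q : ℤ) ∣ ∑ a ∈ 𝒜, J a s ∧ ((s : ℕ) < S → ∑ a ∈ 𝒜, J a s ≠ 0) := by
  obtain ⟨σ, hσ, F, hFA, hFcard, hFσ⟩ := exists_subset_forall_sign_eq
    (fun a (i : Fin S) => J a (Fin.castAdd T i)) (Icc 1 A) (fun _ => {-1, 1})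
    (fun _ => insert_nonempty _ _) (N := q ^ (S + T))
    (fun a ha i => by
      obtain ⟨ha1, haA⟩ := mem_Icc.1 ha
      rcases (hJ a ha1 haA (Fin.castAdd T i) i.isLt).lt_or_gt with h | h <;> simp [h])
    (by simpa using hA)
  obtain ⟨𝒜, h𝒜F, h𝒜ne, -, h𝒜sum⟩ :=
    exists_subset_card_le_sum_eq_zero (fun a s => (J a s : ZMod q)) (F := F)
      (by simpa using hFcard)
  refine ⟨𝒜, h𝒜F.trans hFA, h𝒜ne,
    fun s => ⟨(sum_intCast_pi_eq_zero_iff q J 𝒜).1 h𝒜sum s, fun hs => ?_⟩⟩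
  have hsign := sign_sum h𝒜ne (σ (s.castLT hs))
    fun a ha => by simpa using hFσ a (h𝒜F ha) (s.castLT hs)
  rw [← sign_ne_zero, hsign]
  rcases mem_insert.1 (hσ (s.castLT hs)) with h | h <;> simp_all

theorem exists_strictMonoOn_Icc_dvd_and_sign_eq (q S T B : ℕ) [NeZero q]
    (hB : 3 ^ S * 2 ^ T * (S + T) * q ^ (S + T) ≤ B) (L : ℕ → Fin (S + T) → ℤ)
    (hL : ∀ b : ℕ, 1 ≤ b → b ≤ B → ∀ s : Fin (S + T), S ≤ (s : ℕ) → L b s ≠ 0) :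
    ∃ (τ : Fin (S + T) → SignType) (P : ℕ → Finset ℕ), StrictMonoOn P (Set.Iic (S + T)) ∧
      P (S + T) ⊆ Icc 1 B ∧ (∀ k ≤ S + T, ∀ s, (q : ℤ) ∣ ∑ b ∈ P k, L b s) ∧
      (∀ b ∈ P (S + T), ∀ s, SignType.sign (L b s) = τ s) ∧
      ∀ s : Fin (S + T), S ≤ (s : ℕ) → τ s ≠ 0 := by
  obtain ⟨τ, hτ, F, hFB, hFcard, hFτ⟩ := exists_subset_forall_sign_eq L (Icc 1 B)
    (fun s => if (s : ℕ) < S then univ else {-1, 1}) (fun s => by split_ifs <;> simp)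
    (N := (S + T) * q ^ (S + T))
    (fun b hb s => by
      obtain ⟨hb1, hbB⟩ := mem_Icc.1 hb
      split_ifs with hs
      · exact mem_univ _
      · rcases (hL b hb1 hbB s (not_lt.1 hs)).lt_or_gt with h | h <;> simp [h])
    (by
      simpa [Fin.prod_univ_add, mul_assoc, show Fintype.card SignType = 3 from rfl] using hB)
  obtain ⟨P, hP, hPF, hPsum⟩ := exists_strictMonoOn_sum_eq_zero (fun b s => (L b s : ZMod q))
    (S + T) (F := F) (by simpa using hFcard)
  refine ⟨τ, P, hP, hPF.trans hFB,
    fun k hk => (sum_intCast_pi_eq_zero_iff q L (P k)).1 (hPsum k hk),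
    fun b hb => hFτ b (hPF hb), fun s hs => ?_⟩
  have hτs := hτ s
  rw [if_neg (not_lt.2 hs)] at hτs
  rcases mem_insert.1 hτs with h | h <;> simp_all

theorem arithmetic_core_general (q S T A B : ℕ) (hq : 0 < q)
    (hA : 2 ^ S * q ^ (S + T) ≤ A)
    (hB : 3 ^ S * 2 ^ T * (S + T) * q ^ (S + T) ≤ B)
    (J : ℕ → Fin (S + T) → ℤ) (L : ℕ → Fin (S + T) → ℤ)
    (hJ : ∀ a : ℕ, 1 ≤ a → a ≤ A → ∀ s : Fin (S + T), (s : ℕ) < S → J a s ≠ 0)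
    (hL : ∀ b : ℕ, 1 ≤ b → b ≤ B → ∀ s : Fin (S + T), S ≤ (s : ℕ) → L b s ≠ 0) :
    ∃ 𝒜 ℬ : Finset ℕ, 𝒜 ⊆ Finset.Icc 1 A ∧ ℬ ⊆ Finset.Icc 1 B ∧ 𝒜.Nonempty ∧
      ∀ s : Fin (S + T),
        (∑ a ∈ 𝒜, J a s) + (∑ b ∈ ℬ, L b s) ≠ 0 ∧
        (q : ℤ) ∣ (∑ a ∈ 𝒜, J a s) + (∑ b ∈ ℬ, L b s) := by
  have := NeZero.of_pos hq
  obtain ⟨𝒜, h𝒜A, h𝒜ne, h𝒜⟩ := exists_subset_Icc_dvd_and_sum_ne_zero q S T A hA J hJ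
  obtain ⟨τ, P, hP, hPB, hPdvd, hPτ, hτ⟩ :=
    exists_strictMonoOn_Icc_dvd_and_sign_eq q S T B hB L hL
  obtain ⟨k, hk, hk0⟩ := exists_le_card_forall_not_of_subsingleton
    (fun k s => ∑ a ∈ 𝒜, J a s + ∑ b ∈ P k, L b s = 0) fun s => by
      rw [Fintype.card_fin]
      refine subsingleton_setOf_add_sum_eq_zero hP (fun b hb => hPτ b hb s)
        fun hτs => (h𝒜 s).2 ?_
      by_contra hs
      exact hτ s (not_lt.1 hs) hτs
  rw [Fintype.card_fin] at hk
  exact ⟨𝒜, P k, h𝒜A, (hP.monotoneOn hk (Set.mem_Iic.2 le_rfl) hk).trans hPB, h𝒜ne,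
    fun s => ⟨hk0 s, dvd_add (h𝒜 s).1 (hPdvd k hk s)⟩⟩

/-- Arithmetic core of Proposition 3.1: a nonempty subfamily of the j's together
with a subfamily of the l's whose total sum has every entry a nonzero multiple of q. -/
theorem arithmetic_core (q S T A B : ℕ) (hq : 0 < q) (hS : 0 < S) (hT : 0 < T)
    (hA : 2 ^ S * q ^ (S + T) ≤ A)
    (hB : 3 ^ S * 2 ^ T * (S + T) * q ^ (S + T) ≤ B)
    (J : ℕ → Fin (S + T) → ℤ) (L : ℕ → Fin (S + T) → ℤ)
    (hJ : ∀ a : ℕ, 1 ≤ a → a ≤ A → ∀ s : Fin (S + T), (s : ℕ) < S → J a s ≠ 0)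
    (hL : ∀ b : ℕ, 1 ≤ b → b ≤ B → ∀ s : Fin (S + T), S ≤ (s : ℕ) → L b s ≠ 0) :
    ∃ 𝒜 ℬ : Finset ℕ, 𝒜 ⊆ Finset.Icc 1 A ∧ ℬ ⊆ Finset.Icc 1 B ∧ 𝒜.Nonempty ∧
      ∀ s : Fin (S + T),
        (∑ a ∈ 𝒜, J a s) + (∑ b ∈ ℬ, L b s) ≠ 0 ∧
        (q : ℤ) ∣ (∑ a ∈ 𝒜, J a s) + (∑ b ∈ ℬ, L b s) :=
  arithmetic_core_general q S T A B hq hA hB J L hJ hL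
end
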